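/- arXiv:2602.04700 — 4 statements merged into one kernel-verified Lean document; each statement's English description precedes it below -/
import Mathlib

section
/- Let D = (G, w) be a weighted dynamical graph with g_D(x) = Σ_{e ∈ E} s(e,x) w(e), and suppose max_{v ∈ V} Σ_{e ∈ E(v)} |w(e)| = ε, where E(v) is the set of edges incident to v. Then δ(D) := max_{x ∈ {-1,1}^{n+1}} g_D(x) − min_{x ∈ {-1,1}^{n+1}} g_D(x) ≥ 2ε. -/
/-- The value `g_D(x) = Σ_{e ∈ E} s(e,x) w(e)` of a weighted dynamical graph on
vertices `v_0, ..., v_n`, encoded by a symmetric weight function `w` with zero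
diagonal (single-vertex edges `{v_j}` are encoded as `w 0 j`, acting via the
ancilla coordinate `x 0`). -/
def gD {n : ℕ} (w : Fin (n + 1) → Fin (n + 1) → ℝ) (x : Fin (n + 1) → ℝ) : ℝ :=
  ∑ i : Fin (n + 1), ∑ j : Fin (n + 1), if i < j then w i j * (x i * x j) else 0

/-- The `±1` point of the cube associated to a Boolean vector. -/
def toPM {n : ℕ} (ε : Fin n → Bool) : Fin n → ℝ := fun i => if ε i then 1 else -1

/-- The maximum difference `δ(D) = max_x g_D(x) − min_x g_D(x)` over `{-1,1}^{n+1}`. -/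
noncomputable def deltaD {n : ℕ} (w : Fin (n + 1) → Fin (n + 1) → ℝ) : ℝ :=
  (Finset.univ.sup' Finset.univ_nonempty fun ε : Fin (n + 1) → Bool => gD w (toPM ε)) -
  (Finset.univ.inf' Finset.univ_nonempty fun ε : Fin (n + 1) → Bool => gD w (toPM ε))

/-! Take a vertex `v` of maximal incident weight and the sign vector `x` with `x v = 1` and
`x j = sign (w v j)` otherwise. Flipping `x v` changes only the edges at `v`, so `g_D` drops by
`2 Σ_{j ≠ v} w v j x j = 2 Σ_{j ≠ v} |w v j| = 2ε`, and `δ(D)` is at least that drop. -/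

open Finset Function

section
variable {n : ℕ} (w : Fin (n + 1) → Fin (n + 1) → ℝ)

lemma gD_update_sub_gD_update (hsym : ∀ i j, w i j = w j i) (x : Fin (n + 1) → ℝ)
    (v : Fin (n + 1)) (a b : ℝ) :
    gD w (update x v a) - gD w (update x v b) =
      (a - b) * ∑ j ∈ univ.filter (· ≠ v), w v j * x j := by
  have hterm : ∀ i j,
      ((if i < j then w i j * (update x v a i * update x v a j) else 0) -
        if i < j then w i j * (update x v b i * update x v b j) else 0) =
      (a - b) * ((if i = v then (if v < j then w v j * x j else 0) else 0) +
        (if j = v then (if i < v then w i v * x i else 0) else 0)) := by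
    intro i j
    by_cases hi : i = v <;> by_cases hj : j = v <;>
      simp [update_of_ne, *] <;> split_ifs <;> ring
  have hsplit : ∑ j ∈ univ.filter (· ≠ v), w v j * x j =
      ∑ j, (if v < j then w v j * x j else 0) + ∑ i, (if i < v then w i v * x i else 0) := by
    rw [← sum_add_distrib, sum_filter]
    refine sum_congr rfl fun j _ => ?_
    rcases lt_trichotomy j v with h | rfl | h
    · simp [h, h.ne, not_lt_of_gt h, hsym j v]
    · simp
    · simp [h, h.ne', not_lt_of_gt h]
  simp only [gD, ← sum_sub_distrib, hterm, hsplit, ← mul_sum, sum_add_distrib, sum_ite_irrel,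
    sum_const_zero, sum_ite_eq', mem_univ, if_true]

lemma toPM_update (e : Fin n → Bool) (v : Fin n) (b : Bool) :
    toPM (update e v b) = update (toPM e) v (if b then 1 else -1) :=
  comp_update (fun b : Bool => if b then (1 : ℝ) else -1) e v b

lemma mul_ite_nonneg_eq_abs (r : ℝ) : r * (if 0 ≤ r then 1 else -1) = |r| := by
  split_ifs with h
  · rw [mul_one, abs_of_nonneg h]
  · rw [mul_neg_one, abs_of_neg (not_le.mp h)]

lemma gD_toPM_sub_le_deltaD (e e' : Fin (n + 1) → Bool) :
    gD w (toPM e) - gD w (toPM e') ≤ deltaD w :=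
  sub_le_sub (le_sup' (fun e => gD w (toPM e)) (mem_univ e))
    (inf'_le (fun e => gD w (toPM e)) (mem_univ e'))

lemma two_mul_sum_abs_le_deltaD (hsym : ∀ i j, w i j = w j i) (v : Fin (n + 1)) :
    2 * ∑ j ∈ univ.filter (· ≠ v), |w v j| ≤ deltaD w := by
  let e : Fin (n + 1) → Bool := fun j => decide (0 ≤ w v j)
  have hfield :
      ∑ j ∈ univ.filter (· ≠ v), w v j * toPM e j = ∑ j ∈ univ.filter (· ≠ v), |w v j| :=
    sum_congr rfl fun j _ => by simpa [toPM, e] using mul_ite_nonneg_eq_abs (w v j)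
  calc 2 * ∑ j ∈ univ.filter (· ≠ v), |w v j|
      = gD w (toPM (update e v true)) - gD w (toPM (update e v false)) := by
        rw [toPM_update, toPM_update, gD_update_sub_gD_update w hsym, hfield]
        norm_num
    _ ≤ deltaD w := gD_toPM_sub_le_deltaD w _ _

end

theorem stmt2_general (n : ℕ) (w : Fin (n + 1) → Fin (n + 1) → ℝ)
    (hsym : ∀ i j, w i j = w j i) (ε : ℝ)
    (hmax : (Finset.univ.sup' Finset.univ_nonempty
      fun v : Fin (n + 1) => ∑ j ∈ Finset.univ.filter (· ≠ v), |w v j|) = ε) :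
    2 * ε ≤ deltaD w := by
  obtain ⟨v, -, hv⟩ := exists_mem_eq_sup' univ_nonempty
    (fun v : Fin (n + 1) => ∑ j ∈ univ.filter (· ≠ v), |w v j|)
  rw [← hmax, hv]
  exact two_mul_sum_abs_le_deltaD w hsym v

/-- Lower bound: if the largest total absolute weight incident to a single vertex is `ε`,
then `δ(D) ≥ 2ε`. -/
theorem stmt2 (n : ℕ) (w : Fin (n + 1) → Fin (n + 1) → ℝ)
    (hsym : ∀ i j, w i j = w j i) (hdiag : ∀ i, w i i = 0) (ε : ℝ)
    (hmax : (Finset.univ.sup' Finset.univ_nonempty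
      fun v : Fin (n + 1) => ∑ j ∈ Finset.univ.filter (· ≠ v), |w v j|) = ε) :
    2 * ε ≤ deltaD w :=
  stmt2_general n w hsym ε hmax
end

section
/- Let g : {-1,1}^n → ℝ and g' : {-1,1}^m → ℝ be functions whose Fourier expansions have zero constant term, and let K, K' ∈ ℝ. Define g'' on {-1,1}^{n+m} by g''(x, x') = (g(x) + K)·(g'(x') + K') − K·K'. Then g'' has zero constant Fourier coefficient and L(g'') = (L(g) + |K|)·(L(g') + |K'|) − |K·K'|. -/
/-!
Adding a constant `K` to `g` only changes the constant coefficient, from `0` to `K`, so the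
1-norm becomes `L(g) + |K|`. As `g + K` and `g' + K'` live on disjoint blocks of coordinates,
the coefficient of their product at `s ⊔ t` is `α_s α'_t`, so the 1-norm is multiplicative;
subtracting `K K'` then cancels exactly the constant coefficient `K K'`. Reading off
coefficients is justified by uniqueness of the Fourier expansion, which follows from
orthogonality of the characters over the `2^n` points of the cube.
-/

/-- `x` is a point of the Boolean cube `{-1,1}^n`. -/
def IsCube {n : ℕ} (x : Fin n → ℝ) : Prop := ∀ i, x i = 1 ∨ x i = -1

/-- `α` is the Fourier expansion of `g`: `g = Σ_b α_b χ_b` on the cube. -/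
def Represents {n : ℕ} (g : (Fin n → ℝ) → ℝ) (α : Finset (Fin n) → ℝ) : Prop :=
  ∀ x : Fin n → ℝ, IsCube x → g x = ∑ b : Finset (Fin n), α b * ∏ i ∈ b, x i

open Finset

def cubePoint {n : ℕ} (σ : Fin n → Bool) : Fin n → ℝ := fun i => if σ i then 1 else -1

lemma isCube_cubePoint {n : ℕ} (σ : Fin n → Bool) : IsCube (cubePoint σ) := fun i => by
  unfold cubePoint; split <;> simp

lemma sum_prod_cubePoint_mul_prod_cubePoint {n : ℕ} (b c : Finset (Fin n)) :
    ∑ σ : Fin n → Bool, (∏ i ∈ b, cubePoint σ i) * ∏ i ∈ c, cubePoint σ i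
      = if b = c then 2 ^ n else 0 := by
  have hfactor (i : Fin n) :
      ∑ s : Bool, (if i ∈ b then (if s then 1 else -1 : ℝ) else 1) *
          (if i ∈ c then (if s then 1 else -1 : ℝ) else 1)
        = if (i ∈ b ↔ i ∈ c) then 2 else 0 := by
    by_cases hb : i ∈ b <;> by_cases hc : i ∈ c <;> norm_num [hb, hc]
  simp_rw [← Fintype.prod_ite_mem b, ← Fintype.prod_ite_mem c, ← prod_mul_distrib, cubePoint]
  rw [← Fintype.prod_sum (κ := fun _ => Bool) fun i s =>
    (if i ∈ b then (if s then 1 else -1 : ℝ) else 1) *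
      (if i ∈ c then (if s then 1 else -1 : ℝ) else 1)]
  simp_rw [hfactor, Fintype.prod_ite_zero, prod_const, card_univ, Fintype.card_fin,
    ← Finset.ext_iff]

lemma eq_zero_of_sum_mul_prod_eq_zero {n : ℕ} {δ : Finset (Fin n) → ℝ}
    (h : ∀ x, IsCube x → ∑ b, δ b * ∏ i ∈ b, x i = 0) : δ = 0 := by
  funext c
  have hcoeff : ∑ σ : Fin n → Bool, (∏ i ∈ c, cubePoint σ i) *
      ∑ b, δ b * ∏ i ∈ b, cubePoint σ i = 2 ^ n * δ c := by
    simp_rw [mul_sum, mul_left_comm _ (δ _)]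
    rw [sum_comm]
    simp_rw [← mul_sum, sum_prod_cubePoint_mul_prod_cubePoint, mul_ite, mul_zero,
      sum_ite_eq, mem_univ, if_true, mul_comm]
  simp only [h _ (isCube_cubePoint _), mul_zero, sum_const_zero] at hcoeff
  simpa using hcoeff.symm

theorem Represents.unique {n : ℕ} {g : (Fin n → ℝ) → ℝ} {α β : Finset (Fin n) → ℝ}
    (hα : Represents g α) (hβ : Represents g β) : α = β :=
  sub_eq_zero.mp <| eq_zero_of_sum_mul_prod_eq_zero fun x hx => by
    simp only [Pi.sub_apply, sub_mul, sum_sub_distrib, ← hα x hx, ← hβ x hx, sub_self]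

theorem Represents.add_const {n : ℕ} {g : (Fin n → ℝ) → ℝ} {α : Finset (Fin n) → ℝ}
    (hα : Represents g α) (c : ℝ) : Represents (fun x => g x + c) (α + Pi.single ∅ c) := by
  intro x hx
  dsimp only
  rw [hα x hx]
  simp only [Pi.add_apply, add_mul, sum_add_distrib, add_right_inj]
  rw [Fintype.sum_eq_single ∅ fun b hb => by simp [hb]]
  simp

def finsetSplit (n m : ℕ) : Finset (Fin (n + m)) ≃ Finset (Fin n) × Finset (Fin m) :=
  finSumFinEquiv.symm.finsetCongr.trans sumEquiv.toEquiv

lemma finsetSplit_empty (n m : ℕ) : finsetSplit n m ∅ = (∅, ∅) := by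
  ext <;> simp [finsetSplit]

lemma prod_finsetSplit_symm {n m : ℕ} (p : Finset (Fin n) × Finset (Fin m))
    (x : Fin (n + m) → ℝ) :
    ∏ k ∈ (finsetSplit n m).symm p, x k
      = (∏ i ∈ p.1, x (Fin.castAdd m i)) * ∏ j ∈ p.2, x (Fin.natAdd n j) := by
  simp [finsetSplit, prod_disjSum]

theorem Represents.mul_split {n m : ℕ} {g : (Fin n → ℝ) → ℝ} {g' : (Fin m → ℝ) → ℝ}
    {α : Finset (Fin n) → ℝ} {α' : Finset (Fin m) → ℝ}
    (hα : Represents g α) (hα' : Represents g' α') :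
    Represents (fun x => g (fun i => x (Fin.castAdd m i)) * g' (fun j => x (Fin.natAdd n j)))
      (fun b => α (finsetSplit n m b).1 * α' (finsetSplit n m b).2) := by
  intro x hx
  dsimp only
  rw [hα _ fun i => hx _, hα' _ fun j => hx _, sum_mul_sum, ← Fintype.sum_prod_type',
    ← (finsetSplit n m).symm.sum_comp]
  refine sum_congr rfl fun p _ => ?_
  rw [prod_finsetSplit_symm, Equiv.apply_symm_apply]
  ring

lemma sum_abs_add_single {ι : Type*} [Fintype ι] [DecidableEq ι] (f : ι → ℝ) (i : ι) (c : ℝ) :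
    ∑ j, |(f + Pi.single i c : ι → ℝ) j| = ∑ j, |f j| - |f i| + |f i + c| := by
  rw [Fintype.sum_eq_add_sum_compl i, Fintype.sum_eq_add_sum_compl i fun j => |f j|]
  have hcompl : ∀ j ∈ ({i}ᶜ : Finset ι), |(f + Pi.single i c : ι → ℝ) j| = |f j| :=
    fun j hj => by simp [(by simpa using hj : j ≠ i)]
  rw [sum_congr rfl hcompl, Pi.add_apply, Pi.single_eq_same]
  ring

lemma sum_abs_mul_finsetSplit {n m : ℕ} (A : Finset (Fin n) → ℝ) (A' : Finset (Fin m) → ℝ) :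
    ∑ b, |A (finsetSplit n m b).1 * A' (finsetSplit n m b).2| = (∑ s, |A s|) * ∑ t, |A' t| := by
  rw [(finsetSplit n m).sum_comp (fun p => |A p.1 * A' p.2|), sum_mul_sum,
    ← Fintype.sum_prod_type']
  simp only [abs_mul]

/-- If `g` and `g'` have zero constant Fourier coefficient, then
`g''(x,x') = (g(x)+K)(g'(x')+K') − K·K'` has zero constant coefficient and
`L(g'') = (L(g)+|K|)(L(g')+|K'|) − |K·K'|`. -/
theorem stmt6 (n m : ℕ) (g : (Fin n → ℝ) → ℝ) (g' : (Fin m → ℝ) → ℝ) (K K' : ℝ)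
    (α : Finset (Fin n) → ℝ) (α' : Finset (Fin m) → ℝ)
    (γ : Finset (Fin (n + m)) → ℝ)
    (hα : Represents g α) (h0 : α ∅ = 0)
    (hα' : Represents g' α') (h0' : α' ∅ = 0)
    (hγ : Represents
      (fun x : Fin (n + m) → ℝ =>
        (g (fun i => x (Fin.castAdd m i)) + K) * (g' (fun j => x (Fin.natAdd n j)) + K')
          - K * K') γ) :
    γ ∅ = 0 ∧
    ∑ b : Finset (Fin (n + m)), |γ b| =
      ((∑ b : Finset (Fin n), |α b|) + |K|) * ((∑ b : Finset (Fin m), |α' b|) + |K'|)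
        - |K * K'| := by
  set A := α + Pi.single ∅ K
  set A' := α' + Pi.single ∅ K'
  have hA : A ∅ = K := by simp [A, h0]
  have hA' : A' ∅ = K' := by simp [A', h0']
  have hγ_eq : γ = (fun b => A (finsetSplit n m b).1 * A' (finsetSplit n m b).2)
      + Pi.single ∅ (-(K * K')) := by
    refine hγ.unique ?_
    simpa only [sub_eq_add_neg] using ((hα.add_const K).mul_split (hα'.add_const K')).add_const _
  refine ⟨by simp [hγ_eq, finsetSplit_empty, hA, hA'], ?_⟩
  rw [hγ_eq, sum_abs_add_single, sum_abs_mul_finsetSplit, sum_abs_add_single, sum_abs_add_single]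
  simp [finsetSplit_empty, hA, hA', h0, h0', abs_mul]
end

section
/- Let f : S → {0,1} and f' : T → {0,1} be partial Boolean functions with f = g_D + K on S ⊆ {-1,1}^n and f' = g_{D'} + K' on T ⊆ {-1,1}^m, where g_D, g_{D'} have zero constant Fourier coefficient. Define g''(x,x') = (1−K')·g_D(x) + (1−K)·g_{D'}(x') − g_D(x)·g_{D'}(x'). Then g''(x,x') = f''(x,x') − (K + K' − K·K') for (x,x') ∈ S × T, where f''(x,x') = f(x) + f'(x') − f(x)·f'(x') is the OR of f and f'; moreover L(g'') = |1−K'|·L(g_D) + |1−K|·L(g_{D'}) + L(g_D)·L(g_{D'}). -/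
open Finset

noncomputable def cube (n : ℕ) : Finset (Fin n → ℝ) := Fintype.piFinset fun _ => {1, -1}

lemma isCube_of_mem_cube {n : ℕ} {x : Fin n → ℝ} (hx : x ∈ cube n) : IsCube x := by
  simpa [cube, IsCube] using hx

lemma sum_cube_prod_mul_prod {n : ℕ} (b c : Finset (Fin n)) :
    ∑ x ∈ cube n, (∏ i ∈ b, x i) * ∏ i ∈ c, x i = if b = c then 2 ^ n else 0 := by
  have hfactor (i : Fin n) :
      ∑ t ∈ ({1, -1} : Finset ℝ), (if i ∈ b then t else 1) * (if i ∈ c then t else 1)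
        = if (i ∈ b ↔ i ∈ c) then 2 else 0 := by
    rw [sum_pair (by norm_num)]
    by_cases hb : i ∈ b <;> by_cases hc : i ∈ c <;> simp [hb, hc] <;> norm_num
  calc ∑ x ∈ cube n, (∏ i ∈ b, x i) * ∏ i ∈ c, x i
      = ∑ x ∈ cube n, ∏ i, (if i ∈ b then x i else 1) * (if i ∈ c then x i else 1) := by
        simp only [prod_mul_distrib, prod_ite_mem, univ_inter]
    _ = ∏ i, if (i ∈ b ↔ i ∈ c) then (2 : ℝ) else 0 := by
        rw [cube, ← prod_univ_sum (fun _ => {1, -1})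
          fun i t => (if i ∈ b then t else 1) * (if i ∈ c then t else 1)]
        exact prod_congr rfl fun i _ => hfactor i
    _ = if b = c then 2 ^ n else 0 := by
        split_ifs with hbc
        · simp [hbc]
        · obtain ⟨i, hi⟩ : ∃ i, ¬(i ∈ b ↔ i ∈ c) := by
            by_contra! h
            exact hbc (ext h)
          exact prod_eq_zero (mem_univ i) (if_neg hi)

namespace Represents

variable {n : ℕ} {g h : (Fin n → ℝ) → ℝ} {α β : Finset (Fin n) → ℝ}

lemma coeff_eq (hα : Represents g α) (c : Finset (Fin n)) :
    α c = (∑ x ∈ cube n, g x * ∏ i ∈ c, x i) / 2 ^ n := by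
  have hsum : ∑ x ∈ cube n, g x * ∏ i ∈ c, x i = α c * 2 ^ n := by
    calc ∑ x ∈ cube n, g x * ∏ i ∈ c, x i
        = ∑ b, α b * ∑ x ∈ cube n, (∏ i ∈ b, x i) * ∏ i ∈ c, x i := by
          rw [sum_congr rfl fun x hx => by rw [hα x (isCube_of_mem_cube hx)]]
          simp only [sum_mul, mul_sum, mul_assoc]
          exact sum_comm
      _ = α c * 2 ^ n := by simp [sum_cube_prod_mul_prod]
  rw [hsum]
  field_simp

lemma unique_s8 (hα : Represents g α) (hβ : Represents g β) : α = β :=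
  funext fun c => by rw [hα.coeff_eq, hβ.coeff_eq]

lemma add (hα : Represents g α) (hβ : Represents h β) :
    Represents (fun x => g x + h x) (fun b => α b + β b) := fun x hx => by
  simp only [hα x hx, hβ x hx, add_mul, sum_add_distrib]

lemma sub (hα : Represents g α) (hβ : Represents h β) :
    Represents (fun x => g x - h x) (fun b => α b - β b) := fun x hx => by
  simp only [hα x hx, hβ x hx, sub_mul, sum_sub_distrib]

lemma const_mul (hα : Represents g α) (a : ℝ) :
    Represents (fun x => a * g x) (fun b => a * α b) := fun x hx => by
  simp only [hα x hx, mul_sum, mul_assoc]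

end Represents

lemma represents_one (n : ℕ) : Represents (fun _ : Fin n → ℝ => 1) (Pi.single ∅ 1) :=
  fun x _ => by simp [Pi.single_apply]

def finsetSumEquiv (n m : ℕ) : Finset (Fin n) × Finset (Fin m) ≃ Finset (Fin (n + m)) :=
  Finset.sumEquiv.symm.toEquiv.trans finSumFinEquiv.finsetCongr

lemma prod_finsetSumEquiv {n m : ℕ} (b : Finset (Fin n)) (c : Finset (Fin m))
    (x : Fin (n + m) → ℝ) :
    ∏ j ∈ finsetSumEquiv n m (b, c), x j
      = (∏ i ∈ b, x (Fin.castAdd m i)) * ∏ i ∈ c, x (Fin.natAdd n i) := by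
  simp [finsetSumEquiv, Finset.sumEquiv_symm_apply, prod_disjSum]

def tensorCoeff {n m : ℕ} (α : Finset (Fin n) → ℝ) (β : Finset (Fin m) → ℝ)
    (B : Finset (Fin (n + m))) : ℝ :=
  α ((finsetSumEquiv n m).symm B).1 * β ((finsetSumEquiv n m).symm B).2

@[simp]
lemma tensorCoeff_finsetSumEquiv {n m : ℕ} (α : Finset (Fin n) → ℝ) (β : Finset (Fin m) → ℝ)
    (b : Finset (Fin n)) (c : Finset (Fin m)) :
    tensorCoeff α β (finsetSumEquiv n m (b, c)) = α b * β c := by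
  simp [tensorCoeff]

lemma sum_abs_tensorCoeff {n m : ℕ} (α : Finset (Fin n) → ℝ) (β : Finset (Fin m) → ℝ) :
    ∑ B, |tensorCoeff α β B| = (∑ b, |α b|) * ∑ c, |β c| := by
  rw [← (finsetSumEquiv n m).sum_comp, Fintype.sum_prod_type, sum_mul_sum]
  simp [abs_mul]

lemma Represents.tensor {n m : ℕ} {g : (Fin n → ℝ) → ℝ} {h : (Fin m → ℝ) → ℝ}
    {α : Finset (Fin n) → ℝ} {β : Finset (Fin m) → ℝ}
    (hα : Represents g α) (hβ : Represents h β) :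
    Represents (fun x => g (fun i => x (Fin.castAdd m i)) * h (fun j => x (Fin.natAdd n j)))
      (tensorCoeff α β) := fun x hx => by
  dsimp only
  rw [hα _ fun i => hx _, hβ _ fun j => hx _, sum_mul_sum,
    ← (finsetSumEquiv n m).sum_comp, Fintype.sum_prod_type]
  simp only [tensorCoeff_finsetSumEquiv, prod_finsetSumEquiv]
  exact sum_congr rfl fun b _ => sum_congr rfl fun c _ => by ring

lemma Represents.comp_castAdd {n m : ℕ} {g : (Fin n → ℝ) → ℝ} {α : Finset (Fin n) → ℝ}
    (hα : Represents g α) :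
    Represents (fun x : Fin (n + m) → ℝ => g fun i => x (Fin.castAdd m i))
      (tensorCoeff α (Pi.single ∅ 1)) := by
  simpa using hα.tensor (represents_one m)

lemma Represents.comp_natAdd {n m : ℕ} {h : (Fin m → ℝ) → ℝ} {β : Finset (Fin m) → ℝ}
    (hβ : Represents h β) :
    Represents (fun x : Fin (n + m) → ℝ => h fun j => x (Fin.natAdd n j))
      (tensorCoeff (Pi.single ∅ 1) β) := by
  simpa using (represents_one n).tensor hβ

lemma abs_orCombination_tensorCoeff {n m : ℕ} {α : Finset (Fin n) → ℝ}
    {β : Finset (Fin m) → ℝ} (hα : α ∅ = 0) (hβ : β ∅ = 0) (a a' : ℝ)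
    (B : Finset (Fin (n + m))) :
    |a * tensorCoeff α (Pi.single ∅ 1) B + a' * tensorCoeff (Pi.single ∅ 1) β B
        - tensorCoeff α β B|
      = |a| * |tensorCoeff α (Pi.single ∅ 1) B| + |a'| * |tensorCoeff (Pi.single ∅ 1) β B|
        + |tensorCoeff α β B| := by
  obtain ⟨⟨b, c⟩, rfl⟩ := (finsetSumEquiv n m).surjective B
  simp only [tensorCoeff_finsetSumEquiv, Pi.single_apply]
  by_cases hb : b = ∅ <;> by_cases hc : c = ∅ <;> simp [hb, hc, hα, hβ, abs_mul]

lemma sum_abs_pi_single {ι : Type*} [Fintype ι] [DecidableEq ι] (i : ι) (a : ℝ) :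
    ∑ j, |(Pi.single i a : ι → ℝ) j| = |a| := by
  rw [Fintype.sum_eq_single i fun j hj => by simp [hj], Pi.single_eq_same]

theorem stmt8_general (n m : ℕ)
    (S : Set (Fin n → ℝ)) (T : Set (Fin m → ℝ))
    (f : (Fin n → ℝ) → ℝ) (f' : (Fin m → ℝ) → ℝ)
    (gD : (Fin n → ℝ) → ℝ) (gD' : (Fin m → ℝ) → ℝ) (K K' : ℝ)
    (α : Finset (Fin n) → ℝ) (α' : Finset (Fin m) → ℝ)
    (γ : Finset (Fin (n + m)) → ℝ)
    (hα : Represents gD α) (h0 : α ∅ = 0)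
    (hα' : Represents gD' α') (h0' : α' ∅ = 0)
    (hgf : ∀ x ∈ S, f x = gD x + K) (hgf' : ∀ x' ∈ T, f' x' = gD' x' + K')
    (hγ : Represents
      (fun x : Fin (n + m) → ℝ =>
        (1 - K') * gD (fun i => x (Fin.castAdd m i))
          + (1 - K) * gD' (fun j => x (Fin.natAdd n j))
          - gD (fun i => x (Fin.castAdd m i)) * gD' (fun j => x (Fin.natAdd n j))) γ) :
    (∀ x ∈ S, ∀ x' ∈ T,
      (1 - K') * gD x + (1 - K) * gD' x' - gD x * gD' x'
        = (f x + f' x' - f x * f' x') - (K + K' - K * K')) ∧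
    ∑ b : Finset (Fin (n + m)), |γ b| =
      |1 - K'| * (∑ b : Finset (Fin n), |α b|)
        + |1 - K| * (∑ b : Finset (Fin m), |α' b|)
        + (∑ b : Finset (Fin n), |α b|) * (∑ b : Finset (Fin m), |α' b|) := by
  refine ⟨fun x hx x' hx' => by rw [hgf x hx, hgf' x' hx']; ring, ?_⟩
  have hcoeff := hγ.unique_s8
    (((hα.comp_castAdd.const_mul (1 - K')).add (hα'.comp_natAdd.const_mul (1 - K))).sub
      (hα.tensor hα'))
  simp only [hcoeff, abs_orCombination_tensorCoeff h0 h0', sum_add_distrib, ← mul_sum,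
    sum_abs_tensorCoeff, sum_abs_pi_single, abs_one, mul_one, one_mul]

/-- OR composition: with `f = g_D + K` on `S`, `f' = g_{D'} + K'` on `T`, the function
`g''(x,x') = (1−K')g_D(x) + (1−K)g_{D'}(x') − g_D(x)·g_{D'}(x')` satisfies
`g'' = f'' − (K + K' − KK')` on `S × T` where `f'' = f + f' − f·f'` (the OR of `f, f'`),
and `L(g'') = |1−K'|·L(g_D) + |1−K|·L(g_{D'}) + L(g_D)·L(g_{D'})`. -/
theorem stmt8 (n m : ℕ)
    (S : Set (Fin n → ℝ)) (T : Set (Fin m → ℝ))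
    (f : (Fin n → ℝ) → ℝ) (f' : (Fin m → ℝ) → ℝ)
    (gD : (Fin n → ℝ) → ℝ) (gD' : (Fin m → ℝ) → ℝ) (K K' : ℝ)
    (α : Finset (Fin n) → ℝ) (α' : Finset (Fin m) → ℝ)
    (γ : Finset (Fin (n + m)) → ℝ)
    (hScube : ∀ x ∈ S, IsCube x) (hTcube : ∀ x' ∈ T, IsCube x')
    (hfBool : ∀ x ∈ S, f x = 0 ∨ f x = 1)
    (hf'Bool : ∀ x' ∈ T, f' x' = 0 ∨ f' x' = 1)
    (hα : Represents gD α) (h0 : α ∅ = 0)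
    (hα' : Represents gD' α') (h0' : α' ∅ = 0)
    (hgf : ∀ x ∈ S, f x = gD x + K) (hgf' : ∀ x' ∈ T, f' x' = gD' x' + K')
    (hγ : Represents
      (fun x : Fin (n + m) → ℝ =>
        (1 - K') * gD (fun i => x (Fin.castAdd m i))
          + (1 - K) * gD' (fun j => x (Fin.natAdd n j))
          - gD (fun i => x (Fin.castAdd m i)) * gD' (fun j => x (Fin.natAdd n j))) γ) :
    (∀ x ∈ S, ∀ x' ∈ T,
      (1 - K') * gD x + (1 - K) * gD' x' - gD x * gD' x'
        = (f x + f' x' - f x * f' x') - (K + K' - K * K')) ∧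
    ∑ b : Finset (Fin (n + m)), |γ b| =
      |1 - K'| * (∑ b : Finset (Fin n), |α b|)
        + |1 - K| * (∑ b : Finset (Fin m), |α' b|)
        + (∑ b : Finset (Fin n), |α b|) * (∑ b : Finset (Fin m), |α' b|) :=
  stmt8_general n m S T f f' gD gD' K K' α α' γ hα h0 hα' h0' hgf hgf' hγ
end

section
/- Suppose g : {-1,1}^n → ℝ has zero constant Fourier coefficient, and for K ∈ ℝ define the iterated sequence g_1 = g and g_{i+1}(x, y) = (g_i(x) + K_i)·(g(y) + K) − K_i·K on {-1,1}^{n·(i+1)}, where K_1 = K and K_{i+1} = K_i·K. If L(g) + |K| > 1 and L(g) > 0, then L(g_i) ≥ (L(g) + |K|)^i − |K|^i, and in particular if L(g) > 1 then L(g_i) grows at least exponentially in i: L(g_i) = Ω(L(g)^i). -/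
/-!
Write `f = Σ_b α_b χ_b` with `χ_b(x) = ∏_{i ∈ b} x_i`. If `f` and `f'` live on disjoint
variables, then `(f + K)(f' + K') - KK'` has coefficient `(α_a + K[a = ∅])(α'_c + K'[c = ∅])` at
`a ⊔ c`, corrected by `-KK'` at `∅`. With zero constant coefficients this gives
`L((f + K)(f' + K') - KK') = (L f + |K|)(L f' + |K'|) - |KK'|`, so by induction
`L(g_i) = (L g + |K|)^i - |K|^i`. Since the characters are orthogonal on the cube, the expansion
is unique, so this holds for every expansion of `g_i`, and `(a + b)^i ≥ a^i + b^i` for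
`a, b ≥ 0` gives `L(g_i) ≥ L(g)^i`.
-/

open Finset

namespace BooleanFourier

variable {ι κ : Type*}

noncomputable section

def eval [Fintype ι] (α : Finset ι → ℝ) (x : ι → ℝ) : ℝ := ∑ b, α b * ∏ i ∈ b, x i

def l1Norm [Fintype ι] (α : Finset ι → ℝ) : ℝ := ∑ b, |α b|

lemma l1Norm_nonneg [Fintype ι] (α : Finset ι → ℝ) : 0 ≤ l1Norm α :=
  sum_nonneg fun b _ => abs_nonneg (α b)

def cube (ι : Type*) [Fintype ι] [DecidableEq ι] : Finset (ι → ℝ) :=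
  Fintype.piFinset fun _ => {1, -1}

def reindex (e : ι ≃ κ) (α : Finset ι → ℝ) (s : Finset κ) : ℝ := α (e.finsetCongr.symm s)

def disjMul (α : Finset ι → ℝ) (β : Finset κ → ℝ) (s : Finset (ι ⊕ κ)) : ℝ :=
  α s.toLeft * β s.toRight

def andCompose [DecidableEq ι] [DecidableEq κ] (α : Finset ι → ℝ) (K : ℝ) (β : Finset κ → ℝ)
    (K' : ℝ) : Finset (ι ⊕ κ) → ℝ :=
  disjMul (α + Pi.single ∅ K) (β + Pi.single ∅ K') + Pi.single ∅ (-(K * K'))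

end

section Uniqueness

variable [Fintype ι] [DecidableEq ι]

lemma mem_cube {x : ι → ℝ} : x ∈ cube ι ↔ ∀ i, x i = 1 ∨ x i = -1 := by
  simp [cube]

lemma sum_cube_prod (d : Finset ι) :
    ∑ x ∈ cube ι, ∏ i ∈ d, x i = if d = ∅ then 2 ^ Fintype.card ι else 0 := by
  have hpair : ∀ i, ∑ t ∈ ({1, -1} : Finset ℝ), (if i ∈ d then t else 1)
      = if i ∈ d then 0 else 2 := by
    intro i
    rw [sum_pair (by norm_num)]
    split_ifs <;> norm_num
  have hind : ∀ x : ι → ℝ, ∏ i ∈ d, x i = ∏ i, if i ∈ d then x i else 1 :=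
    fun x => (Fintype.prod_ite_mem d x).symm
  simp_rw [hind, cube]
  rw [sum_prod_piFinset _ fun i t => if i ∈ d then t else 1]
  simp_rw [hpair]
  split_ifs with hd
  · simp [hd]
  · obtain ⟨i, hi⟩ := nonempty_iff_ne_empty.2 hd
    exact prod_eq_zero (mem_univ i) (if_pos hi)

lemma prod_mul_prod_eq_prod_symmDiff {x : ι → ℝ} (hx : ∀ i, x i = 1 ∨ x i = -1)
    (b c : Finset ι) : (∏ i ∈ b, x i) * ∏ i ∈ c, x i = ∏ i ∈ symmDiff b c, x i := by
  have hsq : ∀ i, x i * x i = 1 := fun i => by rcases hx i with h | h <;> simp [h]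
  rw [← Fintype.prod_ite_mem b, ← Fintype.prod_ite_mem c,
    ← Fintype.prod_ite_mem (symmDiff b c), ← prod_mul_distrib]
  refine prod_congr rfl fun i _ => ?_
  by_cases hb : i ∈ b <;> by_cases hc : i ∈ c <;> simp [hb, hc, hsq, mem_symmDiff]

lemma sum_cube_eval_mul_prod (α : Finset ι → ℝ) (c : Finset ι) :
    ∑ x ∈ cube ι, eval α x * ∏ i ∈ c, x i = 2 ^ Fintype.card ι * α c := by
  calc ∑ x ∈ cube ι, eval α x * ∏ i ∈ c, x i
      = ∑ b, α b * ∑ x ∈ cube ι, ∏ i ∈ symmDiff b c, x i := by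
        simp_rw [eval, sum_mul, mul_sum, mul_assoc]
        rw [sum_comm]
        refine sum_congr rfl fun b _ => sum_congr rfl fun x hx => ?_
        rw [prod_mul_prod_eq_prod_symmDiff (mem_cube.1 hx)]
    _ = 2 ^ Fintype.card ι * α c := by
        simp_rw [sum_cube_prod, ← bot_eq_empty, symmDiff_eq_bot]
        simp [mul_comm]

lemma eq_of_eval_eq_on_cube {α β : Finset ι → ℝ}
    (h : ∀ x : ι → ℝ, (∀ i, x i = 1 ∨ x i = -1) → eval α x = eval β x) : α = β := by
  funext c
  have hsum := sum_cube_eval_mul_prod α c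
  rw [sum_congr rfl fun x hx => by rw [h x (mem_cube.1 hx)], sum_cube_eval_mul_prod] at hsum
  exact (mul_left_cancel₀ (by positivity) hsum).symm

end Uniqueness

lemma disjMul_empty (α : Finset ι → ℝ) (β : Finset κ → ℝ) : disjMul α β ∅ = α ∅ * β ∅ := rfl

section Composition

variable [Fintype ι] [Fintype κ]

lemma eval_add_single_empty [DecidableEq ι] (α : Finset ι → ℝ) (c : ℝ) (x : ι → ℝ) :
    eval (α + Pi.single ∅ c) x = eval α x + c := by
  simp_rw [eval, Pi.add_apply, add_mul, sum_add_distrib, add_right_inj]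
  rw [Fintype.sum_eq_single ∅ fun b hb => by simp [hb]]
  simp

lemma l1Norm_add_single_empty [DecidableEq ι] (α : Finset ι → ℝ) (c : ℝ) :
    l1Norm (α + Pi.single ∅ c) = l1Norm α - |α ∅| + |α ∅ + c| := by
  have hrest : ∑ b ∈ univ.erase ∅, |(α + Pi.single ∅ c : Finset ι → ℝ) b|
      = ∑ b ∈ univ.erase ∅, |α b| :=
    sum_congr rfl fun b hb => by simp [ne_of_mem_erase hb]
  rw [l1Norm, l1Norm, ← add_sum_erase _ _ (mem_univ ∅), hrest,
    ← add_sum_erase _ _ (mem_univ ∅), Pi.add_apply, Pi.single_eq_same]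
  ring

lemma eval_disjMul (α : Finset ι → ℝ) (β : Finset κ → ℝ) (x : ι ⊕ κ → ℝ) :
    eval (disjMul α β) x = eval α (x ∘ Sum.inl) * eval β (x ∘ Sum.inr) := by
  rw [eval, ← Equiv.sum_comp sumEquiv.symm.toEquiv, Fintype.sum_prod_type, eval, eval,
    sum_mul_sum]
  refine sum_congr rfl fun a _ => sum_congr rfl fun b _ => ?_
  simp only [disjMul, OrderIso.toEquiv_symm, OrderIso.coe_symm_toEquiv, sumEquiv_symm_apply,
    toLeft_disjSum, toRight_disjSum, prod_disjSum, Function.comp_apply]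
  ring

lemma l1Norm_disjMul (α : Finset ι → ℝ) (β : Finset κ → ℝ) :
    l1Norm (disjMul α β) = l1Norm α * l1Norm β := by
  rw [l1Norm, ← Equiv.sum_comp sumEquiv.symm.toEquiv, Fintype.sum_prod_type, l1Norm, l1Norm,
    sum_mul_sum]
  simp [disjMul, abs_mul]

lemma eval_reindex (e : ι ≃ κ) (α : Finset ι → ℝ) (x : κ → ℝ) :
    eval (reindex e α) x = eval α (x ∘ e) := by
  rw [eval, ← Equiv.sum_comp e.finsetCongr]
  simp only [reindex, Equiv.symm_apply_apply]
  simp only [Equiv.finsetCongr_apply, prod_map]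
  rfl

lemma l1Norm_reindex (e : ι ≃ κ) (α : Finset ι → ℝ) : l1Norm (reindex e α) = l1Norm α := by
  rw [l1Norm, ← Equiv.sum_comp e.finsetCongr]
  simp only [reindex, Equiv.symm_apply_apply]
  rfl

omit [Fintype ι] [Fintype κ] in
lemma reindex_empty (e : ι ≃ κ) (α : Finset ι → ℝ) : reindex e α ∅ = α ∅ := by
  simp [reindex]

variable [DecidableEq ι] [DecidableEq κ]

lemma eval_andCompose (α : Finset ι → ℝ) (K : ℝ) (β : Finset κ → ℝ) (K' : ℝ)
    (x : ι ⊕ κ → ℝ) :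
    eval (andCompose α K β K') x
      = (eval α (x ∘ Sum.inl) + K) * (eval β (x ∘ Sum.inr) + K') - K * K' := by
  rw [andCompose, eval_add_single_empty, eval_disjMul, eval_add_single_empty,
    eval_add_single_empty, sub_eq_add_neg]

omit [Fintype ι] [Fintype κ] in
lemma andCompose_empty {α : Finset ι → ℝ} {β : Finset κ → ℝ} (hα : α ∅ = 0) (hβ : β ∅ = 0)
    (K K' : ℝ) : andCompose α K β K' ∅ = 0 := by
  simp [andCompose, disjMul_empty, hα, hβ]

lemma l1Norm_andCompose {α : Finset ι → ℝ} {β : Finset κ → ℝ} (hα : α ∅ = 0) (hβ : β ∅ = 0)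
    (K K' : ℝ) :
    l1Norm (andCompose α K β K') = (l1Norm α + |K|) * (l1Norm β + |K'|) - |K * K'| := by
  have hmul_empty : disjMul (α + Pi.single ∅ K) (β + Pi.single ∅ K') ∅ = K * K' := by
    simp [disjMul_empty, hα, hβ]
  rw [andCompose, l1Norm_add_single_empty, hmul_empty, l1Norm_disjMul, l1Norm_add_single_empty,
    l1Norm_add_single_empty, hα, hβ]
  simp

end Composition

end BooleanFourier

open BooleanFourier

def snocBlockEquiv (m : ℕ) (κ : Type*) : (Fin (m + 1) × κ) ⊕ κ ≃ Fin (m + 2) × κ :=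
  ((Equiv.refl _).sumCongr (Equiv.uniqueProd κ (Fin 1)).symm).trans
    ((Equiv.sumProdDistrib _ _ _).symm.trans (finSumFinEquiv.prodCongr (Equiv.refl κ)))

theorem exists_coeff_iterate (n : ℕ) (g : (Fin n → ℝ) → ℝ) (K : ℝ) (α : Finset (Fin n) → ℝ)
    (hα : Represents g α) (h0 : α ∅ = 0) (G : (i : ℕ) → (Fin (i + 1) → Fin n → ℝ) → ℝ)
    (hG0 : ∀ y, G 0 y = g (y 0))
    (hGsucc : ∀ (i : ℕ) (y : Fin (i + 2) → Fin n → ℝ),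
      G (i + 1) y =
        (G i (fun j => y j.castSucc) + K ^ (i + 1)) * (g (y (Fin.last (i + 1))) + K)
          - K ^ (i + 1) * K) (i : ℕ) :
    ∃ β : Finset (Fin (i + 1) × Fin n) → ℝ, β ∅ = 0 ∧
      (∀ y : Fin (i + 1) → Fin n → ℝ, (∀ j, IsCube (y j)) →
        G i y = eval β (fun p => y p.1 p.2)) ∧
      l1Norm β = (l1Norm α + |K|) ^ (i + 1) - |K| ^ (i + 1) := by
  induction i with
  | zero =>
    refine ⟨reindex (Equiv.uniqueProd (Fin n) (Fin 1)).symm α, by rw [reindex_empty, h0],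
      fun y hy => ?_, by rw [l1Norm_reindex]; ring⟩
    rw [eval_reindex, hG0, hα _ (hy 0)]
    rfl
  | succ i ih =>
    -- `snocBlockEquiv` sends `inl (j, k)` to `(j.castSucc, k)` and `inr k` to `(Fin.last _, k)`
    -- definitionally, which is what the `rfl` below uses.
    obtain ⟨β, hβ0, hβG, hβL⟩ := ih
    refine ⟨reindex (snocBlockEquiv i (Fin n)) (andCompose β (K ^ (i + 1)) α K),
      by rw [reindex_empty, andCompose_empty hβ0 h0], fun y hy => ?_, ?_⟩
    · rw [eval_reindex, eval_andCompose, hGsucc, hβG _ fun j => hy _, hα _ (hy _)]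
      rfl
    · rw [l1Norm_reindex, l1Norm_andCompose hβ0 h0, hβL, abs_mul, abs_pow]
      ring

theorem stmt9_general (n : ℕ) (g : (Fin n → ℝ) → ℝ) (K : ℝ) (α : Finset (Fin n) → ℝ)
    (hα : Represents g α) (h0 : α ∅ = 0)
    (G : (i : ℕ) → (Fin (i + 1) → Fin n → ℝ) → ℝ)
    (hG0 : ∀ y, G 0 y = g (y 0))
    (hGsucc : ∀ (i : ℕ) (y : Fin (i + 2) → Fin n → ℝ),
      G (i + 1) y =
        (G i (fun j => y j.castSucc) + K ^ (i + 1)) * (g (y (Fin.last (i + 1))) + K)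
          - K ^ (i + 1) * K)
    (A : (i : ℕ) → Finset (Fin (i + 1) × Fin n) → ℝ)
    (hA : ∀ (i : ℕ) (y : Fin (i + 1) → Fin n → ℝ), (∀ j, IsCube (y j)) →
      G i y = ∑ b : Finset (Fin (i + 1) × Fin n), A i b * ∏ p ∈ b, y p.1 p.2) :
    (∀ i : ℕ,
      ((∑ b : Finset (Fin n), |α b|) + |K|) ^ (i + 1) - |K| ^ (i + 1) ≤
        ∑ b : Finset (Fin (i + 1) × Fin n), |A i b|) ∧
    (1 < ∑ b : Finset (Fin n), |α b| →
      ∃ c : ℝ, 0 < c ∧ ∀ i : ℕ,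
        c * (∑ b : Finset (Fin n), |α b|) ^ (i + 1) ≤
          ∑ b : Finset (Fin (i + 1) × Fin n), |A i b|) := by
  have hL : ∀ i, l1Norm (A i) = (l1Norm α + |K|) ^ (i + 1) - |K| ^ (i + 1) := fun i => by
    obtain ⟨β, -, hβG, hβL⟩ := exists_coeff_iterate n g K α hα h0 G hG0 hGsucc i
    have hAβ : A i = β := eq_of_eval_eq_on_cube fun x hx =>
      (hA i (Function.curry x) fun j k => hx (j, k)).symm.trans
        (hβG (Function.curry x) fun j k => hx (j, k))
    rw [hAβ, hβL]
  refine ⟨fun i => (hL i).ge, fun _ => ⟨1, one_pos, fun i => ?_⟩⟩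
  have hpow := pow_add_pow_le (l1Norm_nonneg α) (abs_nonneg K) i.add_one_ne_zero
  change 1 * l1Norm α ^ (i + 1) ≤ l1Norm (A i)
  rw [hL]
  linarith

/-- Iterating the AND-composition `g_{i+1}(x,y) = (g_i(x)+K_i)(g(y)+K) − K_i·K`
(with `K_i = K^i`, `g_1 = g`, blocks of variables disjoint) gives
`L(g_i) ≥ (L(g)+|K|)^i − |K|^i`; in particular if `L(g) > 1` then
`L(g_i) = Ω(L(g)^i)` grows at least exponentially.  Here `G i` stands for `g_{i+1}`,
its variables are grouped into `i+1` blocks of `n`, and `A i` is its Fourier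
expansion over the index type `Fin (i+1) × Fin n`. -/
theorem stmt9 (n : ℕ) (g : (Fin n → ℝ) → ℝ) (K : ℝ) (α : Finset (Fin n) → ℝ)
    (hα : Represents g α) (h0 : α ∅ = 0)
    (hL1 : 1 < (∑ b : Finset (Fin n), |α b|) + |K|)
    (hLpos : 0 < ∑ b : Finset (Fin n), |α b|)
    (G : (i : ℕ) → (Fin (i + 1) → Fin n → ℝ) → ℝ)
    (hG0 : ∀ y, G 0 y = g (y 0))
    (hGsucc : ∀ (i : ℕ) (y : Fin (i + 2) → Fin n → ℝ),
      G (i + 1) y =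
        (G i (fun j => y j.castSucc) + K ^ (i + 1)) * (g (y (Fin.last (i + 1))) + K)
          - K ^ (i + 1) * K)
    (A : (i : ℕ) → Finset (Fin (i + 1) × Fin n) → ℝ)
    (hA : ∀ (i : ℕ) (y : Fin (i + 1) → Fin n → ℝ), (∀ j, IsCube (y j)) →
      G i y = ∑ b : Finset (Fin (i + 1) × Fin n), A i b * ∏ p ∈ b, y p.1 p.2) :
    (∀ i : ℕ,
      ((∑ b : Finset (Fin n), |α b|) + |K|) ^ (i + 1) - |K| ^ (i + 1) ≤
        ∑ b : Finset (Fin (i + 1) × Fin n), |A i b|) ∧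
    (1 < ∑ b : Finset (Fin n), |α b| →
      ∃ c : ℝ, 0 < c ∧ ∀ i : ℕ,
        c * (∑ b : Finset (Fin n), |α b|) ^ (i + 1) ≤
          ∑ b : Finset (Fin (i + 1) × Fin n), |A i b|) :=
  stmt9_general n g K α hα h0 G hG0 hGsucc A hA
end
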